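/- arXiv:2107.05895 — 3 statements merged into one kernel-verified Lean document; each statement's English description precedes it below -/
import Mathlib

section
/- In a spherical occlusion diagram, no two arcs intersect in more than one point. -/
open scoped RealInnerProductSpace

noncomputable section

/-- Points of `ℝ³`. -/
abbrev V3 : Type := EuclideanSpace ℝ (Fin 3)

/-- The unit sphere in `ℝ³`. -/
def unitSphere : Set V3 := Metric.sphere 0 1

/-- A geodesic arc on the unit sphere: the shortest spherical path between two
distinct, non-antipodal unit vectors.  Such an arc is automatically strictly
shorter than a great semicircle. -/
structure Arc : Type where
  p : V3
  q : V3
  hp : ‖p‖ = 1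
  hq : ‖q‖ = 1
  hne : p ≠ q
  hnantip : p ≠ -q

noncomputable instance : DecidableEq Arc := Classical.decEq _

namespace Arc

/-- The set of points of an arc: normalized nonnegative combinations of the
two endpoints. -/
def carrier (a : Arc) : Set V3 :=
  {x | ∃ s t : ℝ, 0 ≤ s ∧ 0 ≤ t ∧ (s ≠ 0 ∨ t ≠ 0) ∧
    x = ‖s • a.p + t • a.q‖⁻¹ • (s • a.p + t • a.q)}

/-- The two endpoints of an arc. -/
def endpoints (a : Arc) : Set V3 := {a.p, a.q}

/-- The relative interior of an arc: the arc minus its endpoints. -/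
def interior (a : Arc) : Set V3 := a.carrier \ a.endpoints

/-- The great circle containing an arc. -/
def greatCircle (a : Arc) : Set V3 := (Submodule.span ℝ {a.p, a.q} : Set V3) ∩ unitSphere

/-- Two arcs are collinear if they lie on the same great circle. -/
def Collinear (a b : Arc) : Prop := a.greatCircle = b.greatCircle

/-- `a` hits `b` at `x`: `x` is an endpoint of `a` lying in the relative
interior of `b`, and the two arcs are not collinear. -/
def HitsAt (a b : Arc) (x : V3) : Prop :=
  ¬ Collinear a b ∧ x ∈ a.endpoints ∧ x ∈ b.interior

/-- `a` hits (feeds into) `b`; equivalently, `b` blocks `a`. -/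
def Hits (a b : Arc) : Prop := ∃ x, HitsAt a b x

/-- The endpoint of `a` other than `x`. -/
def otherEnd (a : Arc) (x : V3) : V3 :=
  haveI := Classical.decEq V3
  if x = a.p then a.q else a.p

end Arc

/-- Triple product (determinant) of three vectors in `ℝ³`; its sign records
orientation. -/
def tripod (u v w : V3) : ℝ :=
  u 0 * (v 1 * w 2 - v 2 * w 1) - u 1 * (v 0 * w 2 - v 2 * w 0)
    + u 2 * (v 0 * w 1 - v 1 * w 0)

/-- The (signed) side of the great circle of `b` on which a point `y` lies. -/
def Arc.sideOf (b : Arc) (y : V3) : ℝ := tripod b.p b.q y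

/-- A Spherical Occlusion Diagram: a finite non-empty collection of geodesic
arcs on the unit sphere satisfying axioms A1–A3. -/
structure SOD where
  arcs : Finset Arc
  nonempty : arcs.Nonempty
  /-- A1: any two arcs are internally disjoint. -/
  a1 : ∀ a ∈ arcs, ∀ b ∈ arcs, a ≠ b → Disjoint a.interior b.interior
  /-- A2: each arc is blocked by arcs of the diagram at each endpoint. -/
  a2 : ∀ a ∈ arcs, ∀ x ∈ a.endpoints, ∃ b ∈ arcs, Arc.HitsAt a b x
  /-- A3: all arcs that hit the same arc reach it from the same side. -/
  a3 : ∀ b ∈ arcs, ∀ a ∈ arcs, ∀ a' ∈ arcs, ∀ x x',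
        Arc.HitsAt a b x → Arc.HitsAt a' b x' →
        0 < Arc.sideOf b (a.otherEnd x) * Arc.sideOf b (a'.otherEnd x')

/-- The union of all arcs of an SOD. -/
def SOD.union (D : SOD) : Set V3 := ⋃ a ∈ D.arcs, a.carrier

/-- A subset of the sphere is spherically convex if together with any two
non-antipodal points it contains the geodesic arc between them. -/
def SphericallyConvex (s : Set V3) : Prop :=
  ∀ x ∈ s, ∀ y ∈ s, y ≠ -x → ∀ u v : ℝ, 0 ≤ u → 0 ≤ v → (u ≠ 0 ∨ v ≠ 0) →
    ‖u • x + v • y‖⁻¹ • (u • x + v • y) ∈ s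

/-- The tiles of an SOD: the connected components of the complement of the
union of its arcs in the unit sphere. -/
def SOD.tiles (D : SOD) : Set (Set V3) :=
  {T | ∃ p ∈ unitSphere \ D.union, T = connectedComponentIn (unitSphere \ D.union) p}


namespace SODAux

open Arc

lemma indep_of_unit {u v : V3} (hu : ‖u‖ = 1) (hv : ‖v‖ = 1) (h1 : u ≠ v) (h2 : u ≠ -v)
    {s t : ℝ} (h : s • u + t • v = 0) : s = 0 ∧ t = 0 := by
  have hs : s = 0 := by
    by_contra hs
    have h2' : s • u = (-t) • v := by
      rw [neg_smul]; exact eq_neg_of_add_eq_zero_left h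
    have hcv : u = (s⁻¹ * (-t)) • v := by
      rw [mul_smul, ← h2', inv_smul_smul₀ hs]
    have hcabs : |s⁻¹ * (-t)| = 1 := by
      have h3 := congrArg norm hcv
      rw [hu, norm_smul, hv, mul_one, Real.norm_eq_abs] at h3
      exact h3.symm
    rcases (abs_eq zero_le_one).mp hcabs with h4 | h4
    · rw [h4, one_smul] at hcv; exact h1 hcv
    · rw [h4, neg_one_smul] at hcv; exact h2 hcv
  refine ⟨hs, ?_⟩
  rw [hs, zero_smul, zero_add] at h
  have hv0 : v ≠ 0 := by
    intro h0; rw [h0, norm_zero] at hv; exact one_ne_zero hv.symm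
  exact (smul_eq_zero.mp h).resolve_right hv0

lemma arc_indep (a : Arc) {s t : ℝ} (h : s • a.p + t • a.q = 0) : s = 0 ∧ t = 0 :=
  indep_of_unit a.hp a.hq a.hne a.hnantip h

lemma arc_nz (a : Arc) {s t : ℝ} (h : s ≠ 0 ∨ t ≠ 0) : s • a.p + t • a.q ≠ 0 := by
  intro h0
  rcases arc_indep a h0 with ⟨rfl, rfl⟩
  simp at h

lemma coeff_unique (a : Arc) {s t s' t' : ℝ} (h : s • a.p + t • a.q = s' • a.p + t' • a.q) :
    s = s' ∧ t = t' := by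
  have h0 : (s - s') • a.p + (t - t') • a.q = 0 := by
    have h' : s • a.p + t • a.q - (s' • a.p + t' • a.q) = 0 := sub_eq_zero.mpr h
    rw [sub_smul, sub_smul, ← h']
    abel
  obtain ⟨h1, h2⟩ := arc_indep a h0
  constructor <;> linarith

lemma norm_mem {a : Arc} {x : V3} (hx : x ∈ a.carrier) : ‖x‖ = 1 := by
  obtain ⟨s, t, hs, ht, hst, rfl⟩ := hx
  have hw : s • a.p + t • a.q ≠ 0 := arc_nz a hst
  rw [norm_smul, norm_inv, norm_norm, inv_mul_cancel₀ (norm_ne_zero_iff.mpr hw)]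

lemma mem_span {a : Arc} {x : V3} (hx : x ∈ a.carrier) :
    x ∈ Submodule.span ℝ ({a.p, a.q} : Set V3) := by
  obtain ⟨s, t, _, _, _, rfl⟩ := hx
  exact Submodule.smul_mem _ _ (Submodule.add_mem _
    (Submodule.smul_mem _ _ (Submodule.subset_span (by simp)))
    (Submodule.smul_mem _ _ (Submodule.subset_span (by simp))))

lemma not_antipodal {a : Arc} {x : V3} (hx : x ∈ a.carrier) : -x ∉ a.carrier := by
  rintro ⟨s', t', hs', ht', hst', h'⟩
  obtain ⟨s, t, hs, ht, hst, h⟩ := hx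
  have hw : s • a.p + t • a.q ≠ 0 := arc_nz a hst
  have hw' : s' • a.p + t' • a.q ≠ 0 := arc_nz a hst'
  have hc : (0:ℝ) < ‖s • a.p + t • a.q‖⁻¹ := inv_pos.mpr (norm_pos_iff.mpr hw)
  have hc' : (0:ℝ) < ‖s' • a.p + t' • a.q‖⁻¹ := inv_pos.mpr (norm_pos_iff.mpr hw')
  set c := ‖s • a.p + t • a.q‖⁻¹
  set c' := ‖s' • a.p + t' • a.q‖⁻¹
  have h0 : c • (s • a.p + t • a.q) + c' • (s' • a.p + t' • a.q) = 0 := by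
    rw [← h, ← h']; exact add_neg_cancel x
  have h1 : (c * s + c' * s') • a.p + (c * t + c' * t') • a.q = 0 := by
    rw [← h0]; simp only [smul_add, smul_smul, add_smul]; abel
  obtain ⟨e1, e2⟩ := arc_indep a h1
  have hs0 : s = 0 := by nlinarith [mul_nonneg hc.le hs, mul_nonneg hc'.le hs']
  have ht0 : t = 0 := by nlinarith [mul_nonneg hc.le ht, mul_nonneg hc'.le ht']
  rcases hst with h | h <;> [exact h hs0; exact h ht0]

lemma interior_rep {a : Arc} {x : V3} (hx : x ∈ a.interior) :
    ∃ S T : ℝ, 0 < S ∧ 0 < T ∧ x = S • a.p + T • a.q := by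
  obtain ⟨hxc, hxe⟩ := hx
  obtain ⟨s, t, hs, ht, hst, heq⟩ := hxc
  have hw : s • a.p + t • a.q ≠ 0 := arc_nz a hst
  have hwpos : (0:ℝ) < ‖s • a.p + t • a.q‖ := norm_pos_iff.mpr hw
  have hspos : 0 < s := by
    rcases hs.lt_or_eq with h | h
    · exact h
    · exfalso
      have htpos : 0 < t := by
        rcases ht.lt_or_eq with h' | h'
        · exact h'
        · exfalso; rw [← h, ← h'] at hst; simp at hst
      apply hxe
      simp only [Arc.endpoints, Set.mem_insert_iff, Set.mem_singleton_iff]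
      right
      rw [← h, zero_smul, zero_add] at heq
      have hnorm : ‖t • a.q‖ = t := by
        rw [norm_smul, a.hq, mul_one, Real.norm_eq_abs, abs_of_pos htpos]
      rw [heq, hnorm, inv_smul_smul₀ htpos.ne']
  have htpos : 0 < t := by
    rcases ht.lt_or_eq with h | h
    · exact h
    · exfalso
      apply hxe
      simp only [Arc.endpoints, Set.mem_insert_iff, Set.mem_singleton_iff]
      left
      rw [← h, zero_smul, add_zero] at heq
      have hnorm : ‖s • a.p‖ = s := by
        rw [norm_smul, a.hp, mul_one, Real.norm_eq_abs, abs_of_pos hspos]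
      rw [heq, hnorm, inv_smul_smul₀ hspos.ne']
  refine ⟨‖s • a.p + t • a.q‖⁻¹ * s, ‖s • a.p + t • a.q‖⁻¹ * t, ?_, ?_, ?_⟩
  · positivity
  · positivity
  · rw [heq, smul_add, smul_smul, smul_smul]

lemma mem_interior_of_pos (a : Arc) {s t : ℝ} (hs : 0 < s) (ht : 0 < t) :
    ‖s • a.p + t • a.q‖⁻¹ • (s • a.p + t • a.q) ∈ a.interior := by
  constructor
  · exact ⟨s, t, hs.le, ht.le, Or.inl hs.ne', rfl⟩
  · intro hend
    have hw : s • a.p + t • a.q ≠ 0 := arc_nz a (Or.inl hs.ne')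
    have hn : ‖s • a.p + t • a.q‖ ≠ 0 := norm_ne_zero_iff.mpr hw
    simp only [Arc.endpoints, Set.mem_insert_iff, Set.mem_singleton_iff] at hend
    rcases hend with h | h
    · have h2 : s • a.p + t • a.q = ‖s • a.p + t • a.q‖ • a.p + (0:ℝ) • a.q := by
        rw [zero_smul, add_zero]; exact (inv_smul_eq_iff₀ hn).mp h
      exact ht.ne' (coeff_unique a h2).2
    · have h2 : s • a.p + t • a.q = (0:ℝ) • a.p + ‖s • a.p + t • a.q‖ • a.q := by
        rw [zero_smul, zero_add]; exact (inv_smul_eq_iff₀ hn).mp h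
      exact hs.ne' (coeff_unique a h2).1

/-- The reversed arc. -/
def swap (a : Arc) : Arc :=
  ⟨a.q, a.p, a.hq, a.hp, a.hne.symm, fun h => a.hnantip (by rw [h, neg_neg])⟩

lemma swap_carrier (a : Arc) : (swap a).carrier = a.carrier := by
  ext x
  constructor <;> rintro ⟨s, t, hs, ht, hst, rfl⟩ <;>
    exact ⟨t, s, ht, hs, hst.symm, by rw [add_comm]; rfl⟩

lemma swap_endpoints (a : Arc) : (swap a).endpoints = a.endpoints := by
  simp only [Arc.endpoints, swap]
  exact Set.pair_comm _ _

lemma swap_interior (a : Arc) : (swap a).interior = a.interior := by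
  unfold Arc.interior
  rw [swap_carrier, swap_endpoints]

lemma interior_congr {a b : Arc} (h1 : a.p = b.p) (h2 : a.q = b.q) : a.interior = b.interior := by
  unfold Arc.interior Arc.carrier Arc.endpoints
  rw [h1, h2]

lemma eps_aux {S α ε : ℝ} (hS : 0 < S) (hε : 0 < ε) (hle : ε ≤ S / (2 * (|α| + 1))) :
    0 < S + ε * α := by
  have h0 : (0:ℝ) < 2 * (|α| + 1) := by positivity
  rw [le_div_iff₀ h0] at hle
  nlinarith [neg_abs_le α, abs_nonneg α, mul_le_mul_of_nonneg_left (neg_abs_le α) hε.le]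

/-- Key lemma: if an endpoint of `b` lies in the interior of `a` and the other
endpoint of `b` lies in the plane of `a`, then the interiors overlap. -/
lemma key {a b : Arc} (hbq : b.q ∈ Submodule.span ℝ ({a.p, a.q} : Set V3))
    (hbp : b.p ∈ a.interior) : ∃ z, z ∈ a.interior ∧ z ∈ b.interior := by
  obtain ⟨S, T, hS, hT, hrep⟩ := interior_rep hbp
  obtain ⟨α, β, hαβ⟩ := Submodule.mem_span_pair.mp hbq
  set ε : ℝ := min (S / (2 * (|α| + 1))) (T / (2 * (|β| + 1))) with hε_def
  have hε : 0 < ε := lt_min (by positivity) (by positivity)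
  have h1 : 0 < S + ε * α := eps_aux hS hε (min_le_left _ _)
  have h2 : 0 < T + ε * β := eps_aux hT hε (min_le_right _ _)
  have hw_eq : b.p + ε • b.q = (S + ε * α) • a.p + (T + ε * β) • a.q := by
    rw [hrep, ← hαβ]
    simp only [add_smul, smul_add, smul_smul]
    abel
  refine ⟨‖b.p + ε • b.q‖⁻¹ • (b.p + ε • b.q), ?_, ?_⟩
  · have h3 := mem_interior_of_pos a h1 h2
    rwa [← hw_eq] at h3
  · have h3 := mem_interior_of_pos b one_pos hε
    rwa [one_smul] at h3

lemma finrank_span_pair_eq_two {u v : V3}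
    (h : ∀ s t : ℝ, s • u + t • v = 0 → s = 0 ∧ t = 0) :
    Module.finrank ℝ (Submodule.span ℝ ({u, v} : Set V3)) = 2 := by
  have hli : LinearIndependent ℝ ![u, v] := LinearIndependent.pair_iff.mpr h
  have hr : Set.range ![u, v] = {u, v} := by
    ext z
    simp [Fin.exists_fin_two]
    tauto
  have h2 := finrank_span_eq_card hli
  rw [hr] at h2
  simpa using h2

lemma finrank_span_pair_le_two (u v : V3) :
    Module.finrank ℝ (Submodule.span ℝ ({u, v} : Set V3)) ≤ 2 := by
  have hr : Set.range ![u, v] = {u, v} := by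
    ext z
    simp [Fin.exists_fin_two]
    tauto
  have h2 := finrank_range_le_card (R := ℝ) ![u, v]
  rw [hr] at h2
  simpa [Set.finrank] using h2

lemma span_aux {u v : V3} (hu1 : ‖u‖ = 1) (hv1 : ‖v‖ = 1) (h1 : u ≠ v) (h2 : u ≠ -v)
    {a : Arc}
    (hu : u ∈ Submodule.span ℝ ({a.p, a.q} : Set V3))
    (hv : v ∈ Submodule.span ℝ ({a.p, a.q} : Set V3)) :
    Submodule.span ℝ ({u, v} : Set V3) = Submodule.span ℝ ({a.p, a.q} : Set V3) := by
  apply Submodule.eq_of_le_of_finrank_le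
  · rw [Submodule.span_le]
    rintro z hz
    rcases hz with rfl | hz
    · exact hu
    · rw [Set.mem_singleton_iff] at hz; rw [hz]; exact hv
  · rw [finrank_span_pair_eq_two (fun s t h => indep_of_unit hu1 hv1 h1 h2 h)]
    exact finrank_span_pair_le_two a.p a.q

lemma both_endpoints {a b : Arc} (disj : Disjoint a.interior b.interior)
    (ha1 : a.p ∈ Submodule.span ℝ ({b.p, b.q} : Set V3))
    (ha2 : a.q ∈ Submodule.span ℝ ({b.p, b.q} : Set V3))
    (hb1 : b.p ∈ Submodule.span ℝ ({a.p, a.q} : Set V3))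
    (hb2 : b.q ∈ Submodule.span ℝ ({a.p, a.q} : Set V3))
    {z : V3} (hza : z ∈ a.carrier) (hzb : z ∈ b.carrier) :
    z ∈ a.endpoints ∧ z ∈ b.endpoints := by
  by_cases h1 : z ∈ a.endpoints <;> by_cases h2 : z ∈ b.endpoints
  · exact ⟨h1, h2⟩
  · -- z is an endpoint of a, inside the interior of b
    exfalso
    have hzint : z ∈ b.interior := ⟨hzb, h2⟩
    rcases h1 with h | h
    · obtain ⟨w, hwb, hwa⟩ := key (a := b) (b := a) ha2 (h ▸ hzint)
      exact Set.disjoint_left.mp disj hwa hwb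
    · rw [Set.mem_singleton_iff] at h
      obtain ⟨w, hwb, hwa⟩ := key (a := b) (b := swap a)
        (show (swap a).q ∈ _ from ha1) (show (swap a).p ∈ b.interior from show a.q ∈ b.interior from h ▸ hzint)
      rw [swap_interior] at hwa
      exact Set.disjoint_left.mp disj hwa hwb
  · -- z is an endpoint of b, inside the interior of a
    exfalso
    have hzint : z ∈ a.interior := ⟨hza, h1⟩
    rcases h2 with h | h
    · obtain ⟨w, hwa, hwb⟩ := key (a := a) (b := b) hb2 (h ▸ hzint)
      exact Set.disjoint_left.mp disj hwa hwb
    · rw [Set.mem_singleton_iff] at h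
      obtain ⟨w, hwa, hwb⟩ := key (a := a) (b := swap b)
        (show (swap b).q ∈ _ from hb1) (show (swap b).p ∈ a.interior from show b.q ∈ a.interior from h ▸ hzint)
      rw [swap_interior] at hwb
      exact Set.disjoint_left.mp disj hwa hwb
  · exact absurd (Set.disjoint_left.mp disj ⟨hza, h1⟩) (not_not_intro ⟨hzb, h2⟩)

end SODAux

open SODAux in
/-- In a spherical occlusion diagram, no two arcs intersect in
more than one point. -/
theorem stmt_3 (D : SOD) (a b : Arc) (ha : a ∈ D.arcs) (hb : b ∈ D.arcs) (hab : a ≠ b) :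
    (a.carrier ∩ b.carrier).Subsingleton := by
  have disj := D.a1 a ha b hb hab
  intro x hx y hy
  by_contra hxy
  obtain ⟨hxa, hxb⟩ := hx
  obtain ⟨hya, hyb⟩ := hy
  have hxny : x ≠ -y := by
    intro h
    exact not_antipodal hya (h ▸ hxa)
  -- the two arcs lie in the same plane
  have hspan : Submodule.span ℝ ({a.p, a.q} : Set V3) = Submodule.span ℝ ({b.p, b.q} : Set V3) := by
    rw [← span_aux (norm_mem hxa) (norm_mem hya) hxy hxny (mem_span hxa) (mem_span hya)]
    exact span_aux (norm_mem hxb) (norm_mem hyb) hxy hxny (mem_span hxb) (mem_span hyb)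
  have hb1 : b.p ∈ Submodule.span ℝ ({a.p, a.q} : Set V3) := by
    rw [hspan]; exact Submodule.subset_span (by simp)
  have hb2 : b.q ∈ Submodule.span ℝ ({a.p, a.q} : Set V3) := by
    rw [hspan]; exact Submodule.subset_span (by simp)
  have ha1 : a.p ∈ Submodule.span ℝ ({b.p, b.q} : Set V3) := by
    rw [← hspan]; exact Submodule.subset_span (by simp)
  have ha2 : a.q ∈ Submodule.span ℝ ({b.p, b.q} : Set V3) := by
    rw [← hspan]; exact Submodule.subset_span (by simp)
  obtain ⟨hxA, hxB⟩ := both_endpoints disj ha1 ha2 hb1 hb2 hxa hxb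
  obtain ⟨hyA, hyB⟩ := both_endpoints disj ha1 ha2 hb1 hb2 hya hyb
  -- hence the two arcs have the same pair of endpoints, so equal interiors
  have hIntEq : a.interior = b.interior := by
    simp only [Arc.endpoints, Set.mem_insert_iff, Set.mem_singleton_iff] at hxA hxB hyA hyB
    have hswap : a.p = b.q → a.q = b.p → a.interior = b.interior := by
      intro h1 h2
      rw [← swap_interior b]
      exact interior_congr (show a.p = (swap b).p from h1) (show a.q = (swap b).q from h2)
    rcases hxA with h1 | h1 <;> rcases hyA with h2 | h2 <;>
      rcases hxB with h3 | h3 <;> rcases hyB with h4 | h4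
    all_goals first
      | exact absurd (h1.trans h2.symm) hxy
      | exact absurd (h3.trans h4.symm) hxy
      | exact interior_congr (h1.symm.trans h3) (h2.symm.trans h4)
      | exact interior_congr (h2.symm.trans h4) (h1.symm.trans h3)
      | exact hswap (h1.symm.trans h3) (h2.symm.trans h4)
      | exact hswap (h2.symm.trans h4) (h1.symm.trans h3)
  have hz := mem_interior_of_pos a one_pos one_pos
  exact Set.disjoint_left.mp disj hz (hIntEq ▸ hz)
end
end

section
/- Given a spherical occlusion diagram D, the relative interior of every great semicircle on the unit sphere intersects at least one arc of D. -/
open scoped RealInnerProductSpace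

noncomputable section

/-!
Choose `n` completing `p, m` to an orthonormal frame and send `x` to `-⟪m, x⟫ + ⟪n, x⟫ i`: the
open semicircle is the part of the sphere that this real-linear surjection `F : ℝ³ → ℂ` maps to
the negative real axis. If no arc met it, every arc would be mapped into a cone avoiding that
axis, along which `arg` is strictly monotone unless the cone degenerates to a line. Let `e₀` be an
endpoint minimising `arg ∘ F`. By A2 it lies inside an arc `b`; minimality forces `F b` onto the
line `ℝ · F e₀`, with an endpoint `e₁` of `b` on the ray of `F e₀`, so `e₁` is minimal as well.
By A2 again `e₁` lies inside an arc `b'`, which for the same reason also lies on the great circle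
`F⁻¹(ℝ · F e₀)`: then `b'` and `b` are collinear, contradicting A2.
-/

open Complex Set Module
open scoped ComplexOrder ComplexConjugate

namespace Complex

theorem linearIndependent_pair_of_im_mul_conj_ne_zero {u v : ℂ} (h : (u * conj v).im ≠ 0) :
    LinearIndependent ℝ ![u, v] := by
  refine LinearIndependent.pair_iff.mpr fun α β hαβ => ?_
  have hre : α * u.re + β * v.re = 0 := by simpa using congrArg re hαβ
  have him : α * u.im + β * v.im = 0 := by simpa using congrArg im hαβ
  simp only [mul_im, conj_re, conj_im] at h
  refine ⟨(mul_eq_zero.mp ?_).resolve_right h, (mul_eq_zero.mp ?_).resolve_right h⟩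
  · linear_combination v.re * him - v.im * hre
  · linear_combination u.im * hre - u.re * him

theorem strictMonoOn_or_strictAntiOn_arg_segment {u v : ℂ}
    (huv : LinearIndependent ℝ ![u, v])
    (hseg : ∀ r ∈ Icc (0 : ℝ) 1, (1 - r) • u + r • v ∈ slitPlane) :
    StrictMonoOn (fun r : ℝ => arg ((1 - r) • u + r • v)) (Icc 0 1) ∨
      StrictAntiOn (fun r : ℝ => arg ((1 - r) • u + r • v)) (Icc 0 1) := by
  refine ContinuousOn.strictMonoOn_of_injOn_Icc' zero_le_one
    (continuousOn_arg.comp (by fun_prop) hseg) fun r hr r' hr' h => ?_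
  obtain ⟨k, hk⟩ : ∃ k : ℝ, k • ((1 - r) • u + r • v) = (1 - r') • u + r' • v :=
    ⟨_, by
      rw [Complex.real_smul, Complex.ofReal_div]
      exact (arg_eq_arg_iff (slitPlane_ne_zero (hseg r hr)) (slitPlane_ne_zero (hseg r' hr'))).mp h⟩
  obtain ⟨h₁, h₂⟩ := LinearIndependent.pair_iff.mp huv (k * (1 - r) - (1 - r')) (k * r - r')
    (by linear_combination (norm := module) hk)
  obtain rfl : k = 1 := by linarith
  linarith

/-- `(u * conj v).im = 0` says that `u` and `v` are `ℝ`-collinear; otherwise `arg` would be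
strictly monotone along the segment `[u, v]`, which stays in the slit plane. -/
theorem im_mul_conj_eq_zero_of_arg_le {u v : ℂ}
    (hcone : ∀ s t : ℝ, 0 ≤ s → 0 ≤ t → ¬ s • u + t • v < 0)
    {s t : ℝ} (hs : 0 < s) (ht : 0 < t)
    (hu : u ≠ 0 → arg (s • u + t • v) ≤ arg u) (hv : v ≠ 0 → arg (s • u + t • v) ≤ arg v) :
    (u * conj v).im = 0 := by
  by_contra h
  have huv := linearIndependent_pair_of_im_mul_conj_ne_zero h
  have hseg : ∀ r ∈ Icc (0 : ℝ) 1, (1 - r) • u + r • v ∈ slitPlane := by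
    intro r hr
    have hne : (1 - r) • u + r • v ≠ 0 := fun h0 => by
      linarith [LinearIndependent.pair_iff.mp huv _ _ h0]
    rw [mem_slitPlane_iff_not_le_zero, le_iff_eq_or_lt, not_or]
    exact ⟨hne, hcone _ _ (by linarith [hr.2]) hr.1⟩
  set r₀ : ℝ := t / (s + t)
  have hr₀ : r₀ ∈ Ioo 0 1 := ⟨by positivity, (div_lt_one (by positivity)).mpr (by linarith)⟩
  have harg : arg (s • u + t • v) = arg ((1 - r₀) • u + r₀ • v) := by
    have hst : s + t ≠ 0 := by positivity
    have : s • u + t • v = (s + t) • ((1 - r₀) • u + r₀ • v) := by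
      rw [smul_add, smul_smul, smul_smul, mul_div_cancel₀ _ hst, mul_one_sub,
        mul_div_cancel₀ _ hst, add_sub_cancel_right]
    rw [this, Complex.real_smul, arg_real_mul _ (by positivity)]
  rcases strictMonoOn_or_strictAntiOn_arg_segment huv hseg with hmono | hanti
  · have := hmono ⟨le_rfl, zero_le_one⟩ (Ioo_subset_Icc_self hr₀) hr₀.1
    simp only [sub_zero, one_smul, zero_smul, add_zero] at this
    linarith [hu (huv.ne_zero 0)]
  · have := hanti (Ioo_subset_Icc_self hr₀) ⟨zero_le_one, le_rfl⟩ hr₀.2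
    simp only [sub_self, one_smul, zero_smul, zero_add] at this
    linarith [hv (huv.ne_zero 1)]

theorem eq_smul_of_im_mul_conj_eq_zero {u w : ℂ} (hw : w ≠ 0) (h : (u * conj w).im = 0) :
    u = ((u * conj w).re / normSq w) • w := by
  have hw' : normSq w ≠ 0 := normSq_eq_zero.not.mpr hw
  simp only [mul_im, mul_re, conj_re, conj_im] at h ⊢
  apply Complex.ext <;> simp only [smul_re, smul_im, smul_eq_mul] <;> field_simp <;>
    simp only [normSq_apply]
  · linear_combination -w.im * h
  · linear_combination w.re * h

theorem im_mul_conj_eq_zero_of_smul_add_smul_eq {u v w : ℂ} {s t k : ℝ}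
    (huv : (u * conj v).im = 0) (hk : k ≠ 0) (hw : s • u + t • v = k • w) :
    (u * conj w).im = 0 ∧ (v * conj w).im = 0 := by
  have hre : s * u.re + t * v.re = k * w.re := by simpa using congrArg re hw
  have him : s * u.im + t * v.im = k * w.im := by simpa using congrArg im hw
  simp only [mul_im, conj_re, conj_im] at huv ⊢
  refine ⟨(mul_eq_zero.mp (?_ : k * _ = 0)).resolve_left hk,
    (mul_eq_zero.mp (?_ : k * _ = 0)).resolve_left hk⟩
  · linear_combination -u.im * hre + u.re * him + t * huv
  · linear_combination -v.im * hre + v.re * him - s * huv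

theorem exists_pos_smul_of_smul_add_smul_eq {u v w : ℂ} {s t k : ℝ}
    (huv : (u * conj v).im = 0) (hs : 0 ≤ s) (ht : 0 ≤ t) (hk : 0 < k) (hw₀ : w ≠ 0)
    (hw : s • u + t • v = k • w) :
    (∃ κ : ℝ, 0 < κ ∧ u = κ • w) ∨ ∃ κ : ℝ, 0 < κ ∧ v = κ • w := by
  have hre : s * u.re + t * v.re = k * w.re := by simpa using congrArg re hw
  have him : s * u.im + t * v.im = k * w.im := by simpa using congrArg im hw
  have hsum : s * (u * conj w).re + t * (v * conj w).re = k * normSq w := by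
    simp only [mul_re, conj_re, conj_im, normSq_apply]
    linear_combination w.re * hre + w.im * him
  have hpos : 0 < k * normSq w := mul_pos hk (normSq_pos.mpr hw₀)
  obtain ⟨hu, hv⟩ := im_mul_conj_eq_zero_of_smul_add_smul_eq huv hk.ne' hw
  by_cases hu' : 0 < (u * conj w).re
  · exact .inl ⟨_, div_pos hu' (normSq_pos.mpr hw₀), eq_smul_of_im_mul_conj_eq_zero hw₀ hu⟩
  · have hv' : 0 < (v * conj w).re := by nlinarith
    exact .inr ⟨_, div_pos hv' (normSq_pos.mpr hw₀), eq_smul_of_im_mul_conj_eq_zero hw₀ hv⟩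

end Complex

namespace Arc

variable (a : Arc)

theorem linearIndependent : LinearIndependent ℝ ![a.p, a.q] := by
  rw [LinearIndependent.pair_iff' (norm_ne_zero_iff.mp (by rw [a.hp]; exact one_ne_zero))]
  intro r hr
  have hr1 : |r| = 1 := by simpa [norm_smul, a.hp, a.hq] using congrArg norm hr
  rcases abs_eq zero_le_one |>.mp hr1 with rfl | rfl
  · exact a.hne (by simpa using hr)
  · exact a.hnantip (by rw [← hr, neg_one_smul, neg_neg])

theorem smul_add_smul_ne_zero {s t : ℝ} (hst : s ≠ 0 ∨ t ≠ 0) : s • a.p + t • a.q ≠ 0 :=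
  fun h => by have := LinearIndependent.pair_iff.mp a.linearIndependent s t h; tauto

theorem norm_of_mem_carrier {x : V3} (hx : x ∈ a.carrier) : ‖x‖ = 1 := by
  obtain ⟨s, t, -, -, hst, rfl⟩ := hx
  exact norm_smul_inv_norm (a.smul_add_smul_ne_zero hst)

theorem exists_pos_of_mem_interior {x : V3} (hx : x ∈ a.interior) :
    ∃ s t : ℝ, 0 < s ∧ 0 < t ∧ x = ‖s • a.p + t • a.q‖⁻¹ • (s • a.p + t • a.q) := by
  obtain ⟨⟨s, t, hs, ht, hst, rfl⟩, hend⟩ := hx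
  refine ⟨s, t, hs.lt_of_ne ?_, ht.lt_of_ne ?_, rfl⟩ <;> rintro rfl <;> apply hend
  · right
    have ht' : 0 < t := ht.lt_of_ne' (hst.resolve_left (· rfl))
    simp [norm_smul, a.hq, abs_of_pos ht', smul_smul, ht'.ne']
  · left
    have hs' : 0 < s := hs.lt_of_ne' (hst.resolve_right (· rfl))
    simp [norm_smul, a.hp, abs_of_pos hs', smul_smul, hs'.ne']

theorem finrank_span_endpoints : finrank ℝ (Submodule.span ℝ {a.p, a.q}) = 2 := by
  rw [← Matrix.range_cons_cons_empty a.p a.q ![], finrank_span_eq_card a.linearIndependent,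
    Fintype.card_fin]

theorem span_endpoints_eq_ker {f : Dual ℝ V3} (hf : f ≠ 0) (hp : f a.p = 0) (hq : f a.q = 0) :
    Submodule.span ℝ {a.p, a.q} = LinearMap.ker f := by
  refine Submodule.eq_of_le_of_finrank_eq (Submodule.span_le.mpr ?_) ?_
  · rintro x (rfl | rfl) <;> assumption
  · have := Dual.finrank_ker_add_one_of_ne_zero hf
    rw [finrank_euclideanSpace_fin] at this
    rw [a.finrank_span_endpoints]
    omega

theorem collinear_of_apply_eq_zero {f : Dual ℝ V3} (hf : f ≠ 0) {b : Arc}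
    (hap : f a.p = 0) (haq : f a.q = 0) (hbp : f b.p = 0) (hbq : f b.q = 0) : a.Collinear b := by
  rw [Collinear, greatCircle, greatCircle, a.span_endpoints_eq_ker hf hap haq,
    b.span_endpoints_eq_ker hf hbp hbq]

theorem exists_endpoint_apply_ne_zero {F : V3 →ₗ[ℝ] ℂ} (hF : Function.Surjective F) :
    ∃ e ∈ a.endpoints, F e ≠ 0 := by
  by_contra! h
  have hker : finrank ℝ (LinearMap.ker F) = 1 := by
    have := LinearMap.finrank_range_add_finrank_ker F
    rw [LinearMap.range_eq_top.mpr hF, finrank_top, Complex.finrank_real_complex,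
      finrank_euclideanSpace_fin] at this
    omega
  have := Submodule.finrank_mono (Submodule.span_le.mpr fun e he => h e he :
    Submodule.span ℝ {a.p, a.q} ≤ LinearMap.ker F)
  rw [a.finrank_span_endpoints, hker] at this
  omega

variable {F : V3 →ₗ[ℝ] ℂ} (hF : ∀ x ∈ a.carrier, ¬ F x < 0)
include hF

theorem not_smul_add_smul_lt_zero {s t : ℝ} (hs : 0 ≤ s) (ht : 0 ≤ t) :
    ¬ s • F a.p + t • F a.q < 0 := by
  intro hneg
  have hst : s ≠ 0 ∨ t ≠ 0 := by
    by_contra! h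
    simp [h.1, h.2] at hneg
  have hv : 0 < ‖s • a.p + t • a.q‖ := norm_pos_iff.mpr (a.smul_add_smul_ne_zero hst)
  refine hF _ ⟨s, t, hs, ht, hst, rfl⟩ ?_
  rw [map_smul, map_add, map_smul, map_smul, Complex.real_smul]
  exact mul_neg_of_pos_of_neg (zero_lt_real.mpr (inv_pos.mpr hv)) hneg

theorem apply_endpoints_mem_line_of_arg_le {z : V3} (hz : z ∈ a.interior) (hFz : F z ≠ 0)
    (hmin : ∀ e ∈ a.endpoints, F e ≠ 0 → arg (F z) ≤ arg (F e)) :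
    (F a.p * conj (F z)).im = 0 ∧ (F a.q * conj (F z)).im = 0 ∧
      ∃ e ∈ a.endpoints, ∃ κ : ℝ, 0 < κ ∧ F e = κ • F z := by
  obtain ⟨s, t, hs, ht, rfl⟩ := a.exists_pos_of_mem_interior hz
  set v := s • a.p + t • a.q
  have hv : 0 < ‖v‖ := norm_pos_iff.mpr (a.smul_add_smul_ne_zero (.inl hs.ne'))
  have hcomb : s • F a.p + t • F a.q = ‖v‖ • F (‖v‖⁻¹ • v) := by
    rw [map_smul, smul_smul, mul_inv_cancel₀ hv.ne', one_smul, map_add, map_smul, map_smul]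
  have harg : arg (s • F a.p + t • F a.q) = arg (F (‖v‖⁻¹ • v)) := by
    rw [hcomb, Complex.real_smul, arg_real_mul _ hv]
  have hpq : (F a.p * conj (F a.q)).im = 0 :=
    im_mul_conj_eq_zero_of_arg_le (fun _ _ => a.not_smul_add_smul_lt_zero hF) hs ht
      (fun h => harg ▸ hmin _ (.inl rfl) h) (fun h => harg ▸ hmin _ (.inr rfl) h)
  obtain ⟨hpz, hqz⟩ := im_mul_conj_eq_zero_of_smul_add_smul_eq hpq hv.ne' hcomb
  refine ⟨hpz, hqz, ?_⟩
  rcases exists_pos_smul_of_smul_add_smul_eq hpq hs.le ht.le hv hFz hcomb with h | h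
  · exact ⟨a.p, .inl rfl, h⟩
  · exact ⟨a.q, .inr rfl, h⟩

end Arc

namespace SOD

variable (D : SOD) {F : V3 →ₗ[ℝ] ℂ}

theorem exists_endpoint_arg_le (hF : Function.Surjective F) :
    ∃ b ∈ D.arcs, ∃ e ∈ b.endpoints, F e ≠ 0 ∧
      ∀ c ∈ D.arcs, ∀ e' ∈ c.endpoints, F e' ≠ 0 → arg (F e) ≤ arg (F e') := by
  classical
  set E := (D.arcs.biUnion fun c => ({c.p, c.q} : Finset V3)).filter (F · ≠ 0)
  have hE : ∀ e, e ∈ E ↔ (∃ c ∈ D.arcs, e ∈ c.endpoints) ∧ F e ≠ 0 := by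
    simp [E, Arc.endpoints]
  obtain ⟨c, hc⟩ := D.nonempty
  obtain ⟨e, he, hFe⟩ := c.exists_endpoint_apply_ne_zero hF
  obtain ⟨e₀, he₀, hmin⟩ :=
    E.exists_min_image (fun e => arg (F e)) ⟨e, (hE e).mpr ⟨⟨c, hc, he⟩, hFe⟩⟩
  obtain ⟨⟨b, hb, he₀b⟩, hFe₀⟩ := (hE e₀).mp he₀
  exact ⟨b, hb, e₀, he₀b, hFe₀, fun c hc e' he' hFe' => hmin e' ((hE e').mpr ⟨⟨c, hc, he'⟩, hFe'⟩)⟩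

theorem exists_apply_lt_zero (hF : Function.Surjective F) :
    ∃ a ∈ D.arcs, ∃ x ∈ a.carrier, F x < 0 := by
  by_contra! h
  obtain ⟨b₀, hb₀, e₀, he₀, hFe₀, hmin⟩ := D.exists_endpoint_arg_le hF
  obtain ⟨b, hb, -, -, he₀b⟩ := D.a2 b₀ hb₀ e₀ he₀
  obtain ⟨hbp, hbq, e₁, he₁, κ, hκ, hFe₁⟩ :=
    b.apply_endpoints_mem_line_of_arg_le (h b hb) he₀b hFe₀ (hmin b hb)
  have hmin₁ : ∀ c ∈ D.arcs, ∀ e ∈ c.endpoints, F e ≠ 0 → arg (F e₁) ≤ arg (F e) := by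
    rwa [hFe₁, Complex.real_smul, arg_real_mul _ hκ]
  obtain ⟨b', hb', hbb', -, he₁b'⟩ := D.a2 b hb e₁ he₁
  obtain ⟨hb'p, hb'q, -⟩ := b'.apply_endpoints_mem_line_of_arg_le (h b' hb') he₁b'
    (by rw [hFe₁]; exact smul_ne_zero hκ.ne' hFe₀) (hmin₁ b' hb')
  set L : Dual ℝ V3 := imLm ∘ₗ LinearMap.mulRight ℝ (conj (F e₀)) ∘ₗ F
  have hL_apply : ∀ x, L x = (F x * conj (F e₀)).im := fun _ => rfl
  have hL : L ≠ 0 := fun h0 => by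
    obtain ⟨x, hx⟩ := hF (I * F e₀)
    have := hL_apply x
    rw [h0, hx, mul_assoc, mul_conj, I_mul_im, ofReal_re, LinearMap.zero_apply] at this
    exact hFe₀ (normSq_eq_zero.mp this.symm)
  have hscale : ∀ x, (F x * conj (F e₁)).im = κ * L x := fun x => by
    rw [hFe₁, hL_apply, Complex.real_smul, map_mul, conj_ofReal, mul_left_comm, im_ofReal_mul]
  apply hbb'
  refine b.collinear_of_apply_eq_zero hL ?_ ?_ ?_ ?_
  · rw [hL_apply, hbp]
  · rw [hL_apply, hbq]
  · exact (mul_eq_zero.mp ((hscale _).symm.trans hb'p)).resolve_left hκ.ne'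
  · exact (mul_eq_zero.mp ((hscale _).symm.trans hb'q)).resolve_left hκ.ne'

end SOD

section PlaneCoords

variable {E : Type*} [NormedAddCommGroup E] [InnerProductSpace ℝ E]

def planeCoords (u v : E) : E →ₗ[ℝ] ℂ where
  toFun x := ⟪u, x⟫ + ⟪v, x⟫ * I
  map_add' x y := by simp only [inner_add_right]; push_cast; ring
  map_smul' c x := by
    simp only [real_inner_smul_right, RingHom.id_apply, real_smul]; push_cast; ring

theorem planeCoords_apply (u v x : E) : planeCoords u v x = ⟪u, x⟫ + ⟪v, x⟫ * I := rfl

theorem planeCoords_surjective {u v : E} (hu : ‖u‖ = 1) (hv : ‖v‖ = 1) (huv : ⟪u, v⟫ = 0) :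
    Function.Surjective (planeCoords u v) := fun z =>
  ⟨z.re • u + z.im • v, by
    apply Complex.ext <;>
      simp [planeCoords_apply, inner_add_right, real_inner_smul_right, huv, real_inner_comm u v,
        hu, hv]⟩

theorem exists_orthonormalBasis_fin_three [FiniteDimensional ℝ E] (hE : finrank ℝ E = 3)
    {p m : E} (hp : ‖p‖ = 1) (hm : ‖m‖ = 1) (hpm : ⟪p, m⟫ = 0) :
    ∃ b : OrthonormalBasis (Fin 3) ℝ E, b 0 = p ∧ b 1 = m := by
  have hon : Orthonormal ℝ (({0, 1} : Set (Fin 3)).domRestrict ![p, m, 0]) := by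
    rw [orthonormal_iff_ite]
    rintro ⟨i, hi⟩ ⟨j, hj⟩
    simp only [mem_insert_iff, mem_singleton_iff] at hi hj
    rcases hi with rfl | rfl <;> rcases hj with rfl | rfl <;>
      simp [Set.domRestrict_apply, hp, hm, hpm, real_inner_comm p m]
  obtain ⟨b, hb⟩ := hon.exists_orthonormalBasis_extension_of_card_eq (by simpa using hE)
  exact ⟨b, hb 0 (by simp), hb 1 (by simp)⟩

end PlaneCoords

/-- The great semicircle has endpoints `p`, `-p` and midpoint `m`; its relative interior is the
set of points `s • p + t • m` with `s ^ 2 + t ^ 2 = 1` and `0 < t`. -/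
theorem stmt_4 (D : SOD) (p m : V3) (hp : ‖p‖ = 1) (hm : ‖m‖ = 1)
    (hpm : ⟪p, m⟫ = 0) :
    ∃ a ∈ D.arcs, ∃ x ∈ a.carrier, ∃ s t : ℝ,
      0 < t ∧ s ^ 2 + t ^ 2 = 1 ∧ x = s • p + t • m := by
  obtain ⟨b, hb₀, hb₁⟩ := exists_orthonormalBasis_fin_three finrank_euclideanSpace_fin hp hm hpm
  have hn := b.orthonormal
  obtain ⟨a, ha, x, hx, hneg⟩ := D.exists_apply_lt_zero <| planeCoords_surjective (u := -m)
    (v := b 2) (by rw [norm_neg, hm]) (hn.1 2)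
    (by rw [inner_neg_left, ← hb₁, hn.2 (by decide), neg_zero])
  have ⟨hmx, hnx⟩ : 0 < ⟪m, x⟫ ∧ ⟪b 2, x⟫ = 0 := by
    simpa [planeCoords_apply, Complex.lt_def] using hneg
  have hx_eq : x = ⟪p, x⟫ • p + ⟪m, x⟫ • m := by
    simpa [Fin.sum_univ_three, hb₀, hb₁, hnx] using (b.sum_repr' x).symm
  refine ⟨a, ha, x, hx, ⟪p, x⟫, ⟪m, x⟫, hmx, ?_, hx_eq⟩
  have := b.sum_inner_mul_inner x x
  simp only [Fin.sum_univ_three, hb₀, hb₁, real_inner_comm _ x, hnx, real_inner_self_eq_norm_sq,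
    a.norm_of_mem_carrier hx] at this
  linear_combination this
end
end

section
/- Every swirling spherical occlusion diagram is uniform: each arc blocks exactly two arcs. -/
open scoped RealInnerProductSpace

noncomputable section

/-- A swirl of degree `k` in an SOD: a cyclic sequence of `k` distinct arcs of
the diagram, each feeding into the next (at the point `pt (i+1)`), all turning
in the same rotational direction (all clockwise or all counterclockwise, as
recorded by the sign of the orientation determinant at consecutive corners). -/
structure Swirl (D : SOD) (k : ℕ) where
  kpos : 0 < k
  arc : ZMod k → Arc
  pt : ZMod k → V3
  mem : ∀ i, arc i ∈ D.arcs
  inj : Function.Injective arc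
  hits : ∀ i, Arc.HitsAt (arc i) (arc (i + 1)) (pt (i + 1))
  dir : (∀ i, tripod (pt i) (pt (i + 1)) (pt (i + 2)) < 0) ∨
        (∀ i, 0 < tripod (pt i) (pt (i + 1)) (pt (i + 2)))

/-- A clockwise swirl. -/
def Swirl.Clockwise {D : SOD} {k : ℕ} (S : Swirl D k) : Prop :=
  ∀ i, tripod (S.pt i) (S.pt (i + 1)) (S.pt (i + 2)) < 0

/-- A counterclockwise swirl. -/
def Swirl.Counterclockwise {D : SOD} {k : ℕ} (S : Swirl D k) : Prop :=
  ∀ i, 0 < tripod (S.pt i) (S.pt (i + 1)) (S.pt (i + 2))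

/-- Two swirls are equal as cyclic sequences of arcs. -/
def Swirl.CyclicEq {D : SOD} {k₁ k₂ : ℕ} (S₁ : Swirl D k₁) (S₂ : Swirl D k₂) : Prop :=
  k₁ = k₂ ∧ ∃ j : ℕ, ∀ i : ℕ, S₁.arc ((i + j : ℕ) : ZMod k₁) = S₂.arc ((i : ℕ) : ZMod k₂)

/-- The union of the arcs of a swirl. -/
def Swirl.carrier {D : SOD} {k : ℕ} (S : Swirl D k) : Set V3 := ⋃ i, (S.arc i).carrier

/-- `E` is the eye of the swirl `S`: the spherically convex one among the two
connected regions into which the arcs of `S` divide the unit sphere. -/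
def Swirl.IsEyeOf {D : SOD} {k : ℕ} (E : Set V3) (S : Swirl D k) : Prop :=
  SphericallyConvex E ∧
    ∃ p ∈ unitSphere \ S.carrier, E = connectedComponentIn (unitSphere \ S.carrier) p

/-- The set of arcs of an SOD blocked by the arc `b`. -/
def SOD.blockedBy (D : SOD) (b : Arc) : Set Arc := {a | a ∈ D.arcs ∧ a.Hits b}

/-- An SOD is swirling if each of its arcs is part of two (distinct) swirls. -/
def SOD.Swirling (D : SOD) : Prop :=
  ∀ a ∈ D.arcs, ∃ (k₁ k₂ : ℕ) (S₁ : Swirl D k₁) (S₂ : Swirl D k₂),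
    (∃ i, S₁.arc i = a) ∧ (∃ i, S₂.arc i = a) ∧ ¬ S₁.CyclicEq S₂

/-! ### Auxiliary lemmas -/

section Aux

lemma tripod_cyc (u v w : V3) : tripod u v w = tripod v w u := by unfold tripod; ring

lemma tripod_swap (u v w : V3) : tripod u v w = - tripod v u w := by unfold tripod; ring

lemma tripod_smul_add_fst (r s t : ℝ) (p q y w : V3) :
    tripod (r • (s • p + t • q)) y w = r * (s * tripod p y w + t * tripod q y w) := by
  unfold tripod
  simp only [PiLp.smul_apply, PiLp.add_apply, smul_eq_mul]
  ring

lemma tripod_smul_add_thd (r s t : ℝ) (u v p q : V3) :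
    tripod u v (r • (s • p + t • q)) = r * (s * tripod u v p + t * tripod u v q) := by
  unfold tripod
  simp only [PiLp.smul_apply, PiLp.add_apply, smul_eq_mul]
  ring

lemma tripod_self12 (p w : V3) : tripod p p w = 0 := by unfold tripod; ring
lemma tripod_self13 (p w : V3) : tripod p w p = 0 := by unfold tripod; ring
lemma tripod_self23 (p w : V3) : tripod w p p = 0 := by unfold tripod; ring

namespace Arc

/-- Any point of the carrier has zero side with respect to its own arc. -/
lemma sideOf_carrier {b : Arc} {x : V3} (hx : x ∈ b.carrier) : b.sideOf x = 0 := by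
  obtain ⟨s, t, _, _, _, rfl⟩ := hx
  unfold sideOf
  rw [tripod_smul_add_thd]
  rw [tripod_self13, tripod_self23]
  ring

lemma p_mem_carrier (a : Arc) : a.p ∈ a.carrier := by
  refine ⟨1, 0, zero_le_one, le_refl 0, Or.inl one_ne_zero, ?_⟩
  simp [a.hp]

lemma q_mem_carrier (a : Arc) : a.q ∈ a.carrier := by
  refine ⟨0, 1, le_refl 0, zero_le_one, Or.inr one_ne_zero, ?_⟩
  simp [a.hq]

/-- A point in the relative interior of an arc is a normalized strictly
positive combination of the endpoints. -/
lemma interior_repr {a : Arc} {x : V3} (hx : x ∈ a.interior) :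
    ∃ r s t : ℝ, 0 < r ∧ 0 < s ∧ 0 < t ∧ x = r • (s • a.p + t • a.q) := by
  obtain ⟨⟨s, t, hs, ht, hst, hxe⟩, hnot⟩ := hx
  have hpq : a.p ≠ -a.q := a.hnantip
  have hs' : s ≠ 0 := by
    rintro rfl
    have ht' : t ≠ 0 := by tauto
    have ht'' : 0 < t := lt_of_le_of_ne ht (Ne.symm ht')
    have : ‖(0:ℝ) • a.p + t • a.q‖ = t := by
      simp [norm_smul, a.hq, abs_of_pos ht'']
    rw [this] at hxe
    have : x = a.q := by
      rw [hxe]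
      simp [smul_smul, inv_mul_cancel₀ ht']
    exact hnot (by rw [this]; exact Or.inr rfl)
  have ht' : t ≠ 0 := by
    rintro rfl
    have hs'' : 0 < s := lt_of_le_of_ne hs (Ne.symm hs')
    have : ‖s • a.p + (0:ℝ) • a.q‖ = s := by
      simp [norm_smul, a.hp, abs_of_pos hs'']
    rw [this] at hxe
    have : x = a.p := by
      rw [hxe]
      simp [smul_smul, inv_mul_cancel₀ hs']
    exact hnot (by rw [this]; exact Or.inl rfl)
  have hsp : 0 < s := lt_of_le_of_ne hs (Ne.symm hs')
  have htp : 0 < t := lt_of_le_of_ne ht (Ne.symm ht')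
  have hv : s • a.p + t • a.q ≠ 0 := by
    intro h0
    have : a.q = (-(s/t)) • a.p := by
      have : t • a.q = -(s • a.p) := by
        rw [eq_neg_iff_add_eq_zero, add_comm]; exact h0
      have := congrArg (fun z => t⁻¹ • z) this
      simpa [smul_smul, inv_mul_cancel₀ ht', neg_div, div_eq_inv_mul, mul_comm] using this
    have hnorm : ‖a.q‖ = |s/t| * ‖a.p‖ := by
      rw [this, norm_smul]; simp [abs_div]
    rw [a.hp, a.hq, mul_one, abs_of_pos (div_pos hsp htp)] at hnorm
    have hst' : s = t := by
      field_simp at hnorm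
      linarith
    have : a.q = -a.p := by
      rw [this, hst']
      simp [div_self ht']
    exact hpq (by rw [this]; simp)
  refine ⟨‖s • a.p + t • a.q‖⁻¹, s, t, ?_, hsp, htp, hxe⟩
  exact inv_pos.mpr (norm_pos_iff.mpr hv)

end Arc
section Aux2

open Arc

/-- Uniqueness of the arc hit at a given point (from axiom A1). -/
lemma hit_unique (D : SOD) {a b c : Arc} (hb : b ∈ D.arcs) (hc : c ∈ D.arcs) {x : V3}
    (h1 : a.HitsAt b x) (h2 : a.HitsAt c x) : b = c := by
  by_contra hne
  exact Set.disjoint_left.mp (D.a1 b hb c hc hne) h1.2.2 h2.2.2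

/-- Master sign lemma: if `a` hits `b` at `x`, `w` is interior to `a` and `y`
is an endpoint of `b`, then `tripod w x y` is a multiple of the side of the
other end of `a`, with sign determined by which endpoint `y` is. -/
lemma master {a b : Arc} {x w y : V3}
    (hxa : x ∈ a.endpoints) (hxb : x ∈ b.interior)
    (hw : w ∈ a.interior) (hy : y ∈ b.endpoints) :
    ∃ C : ℝ, tripod w x y = C * b.sideOf (a.otherEnd x) ∧
      ((0 < C ∧ y = b.q) ∨ (C < 0 ∧ y = b.p)) := by
  obtain ⟨r, s, t, hr, hs, ht, hxrepr⟩ := Arc.interior_repr hxb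
  obtain ⟨r', s', t', hr', hs', ht', hwrepr⟩ := Arc.interior_repr hw
  have hsb_x : b.sideOf x = 0 := Arc.sideOf_carrier hxb.1
  have hw_side : b.sideOf w = r' * (s' * b.sideOf a.p + t' * b.sideOf a.q) := by
    show tripod b.p b.q w = _
    rw [hwrepr, tripod_smul_add_thd]; rfl
  have hxa' : x = a.p ∨ x = a.q := hxa
  have hy' : y = b.p ∨ y = b.q := hy
  -- the positive factor relating sideOf w to sideOf (otherEnd x)
  have hK : ∃ K : ℝ, 0 < K ∧ b.sideOf w = K * b.sideOf (a.otherEnd x) := by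
    rcases hxa' with hxp | hxq
    · have h0 : b.sideOf a.p = 0 := by rw [← hxp]; exact hsb_x
      have hoe : a.otherEnd x = a.q := by simp [Arc.otherEnd, hxp]
      exact ⟨r' * t', by positivity, by rw [hw_side, h0, hoe]; ring⟩
    · have h0 : b.sideOf a.q = 0 := by rw [← hxq]; exact hsb_x
      have hxnp : ¬ (x = a.p) := fun h => a.hne (h.symm.trans hxq)
      have hoe : a.otherEnd x = a.p := by simp [Arc.otherEnd, hxnp]
      exact ⟨r' * s', by positivity, by rw [hw_side, h0, hoe]; ring⟩
  obtain ⟨K, hKpos, hKeq⟩ := hK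
  have hcyc : tripod w x y = tripod x y w := tripod_cyc w x y
  rcases hy' with hyp | hyq
  · have hT : tripod x y w = -(r * t * b.sideOf w) := by
      rw [hxrepr, hyp, tripod_smul_add_fst, tripod_self12]
      have h2 : tripod b.q b.p w = - b.sideOf w := by rw [tripod_swap]; rfl
      rw [h2]; ring
    refine ⟨-(r * t * K), ?_, Or.inr ⟨by nlinarith [mul_pos (mul_pos hr ht) hKpos], hyp⟩⟩
    rw [hcyc, hT, hKeq]; ring
  · have hT : tripod x y w = r * s * b.sideOf w := by
      rw [hxrepr, hyq, tripod_smul_add_fst, tripod_self12]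
      have h2 : tripod b.p b.q w = b.sideOf w := rfl
      rw [h2]; ring
    refine ⟨r * s * K, ?_, Or.inl ⟨by positivity, hyq⟩⟩
    rw [hcyc, hT, hKeq]; ring
section Aux3

open Arc

variable {D : SOD}

lemma Swirl.hits' {k : ℕ} (S : Swirl D k) (i : ZMod k) :
    Arc.HitsAt (S.arc (i-1)) (S.arc i) (S.pt i) := by
  have h := S.hits (i-1)
  rwa [(by ring : i - 1 + 1 = i)] at h

lemma Swirl.cw_at {k : ℕ} {S : Swirl D k} (h : S.Clockwise) (i : ZMod k) :
    tripod (S.pt (i-1)) (S.pt i) (S.pt (i+1)) < 0 := by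
  have h2 := h (i-1)
  rwa [(by ring : i - 1 + 1 = i), (by ring : i - 1 + 2 = i + 1)] at h2

lemma Swirl.ccw_at {k : ℕ} {S : Swirl D k} (h : S.Counterclockwise) (i : ZMod k) :
    0 < tripod (S.pt (i-1)) (S.pt i) (S.pt (i+1)) := by
  have h2 := h (i-1)
  rwa [(by ring : i - 1 + 1 = i), (by ring : i - 1 + 2 = i + 1)] at h2

lemma swirl_master {k : ℕ} (S : Swirl D k) (i : ZMod k) :
    ∃ C : ℝ, tripod (S.pt (i-1)) (S.pt i) (S.pt (i+1)) =
        C * (S.arc i).sideOf ((S.arc (i-1)).otherEnd (S.pt i)) ∧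
      ((0 < C ∧ S.pt (i+1) = (S.arc i).q) ∨ (C < 0 ∧ S.pt (i+1) = (S.arc i).p)) := by
  have h1 := S.hits' i
  have h2 := S.hits' (i-1)
  have h3 := S.hits i
  exact master h1.2.1 h1.2.2 h2.2.2 h3.2.1

lemma side_mul_pos {k k' : ℕ} (S : Swirl D k) (S' : Swirl D k') (i : ZMod k) (j : ZMod k')
    (hb : S.arc i = S'.arc j) :
    0 < (S.arc i).sideOf ((S.arc (i-1)).otherEnd (S.pt i)) *
        (S.arc i).sideOf ((S'.arc (j-1)).otherEnd (S'.pt j)) := by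
  have h1 := S.hits' i
  have h2 := S'.hits' j
  rw [← hb] at h2
  exact D.a3 (S.arc i) (S.mem i) _ (S.mem (i-1)) _ (S'.mem (j-1)) _ _ h1 h2

/-- If the orientation signs agree at a common arc, the exit points agree. -/
lemma exit_eq {k k' : ℕ} (S : Swirl D k) (S' : Swirl D k') (i : ZMod k) (j : ZMod k')
    (hb : S.arc i = S'.arc j)
    (hT : 0 < tripod (S.pt (i-1)) (S.pt i) (S.pt (i+1)) *
          tripod (S'.pt (j-1)) (S'.pt j) (S'.pt (j+1))) :
    S.pt (i+1) = S'.pt (j+1) := by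
  obtain ⟨C, hC, hCd⟩ := swirl_master S i
  obtain ⟨C', hC', hCd'⟩ := swirl_master S' j
  have hσ := side_mul_pos S S' i j hb
  rw [← hb] at hC'
  rw [hC, hC'] at hT
  have hCC' : 0 < C * C' := by
    by_contra hle
    push_neg at hle
    nlinarith
  rcases hCd with ⟨h, hy⟩ | ⟨h, hy⟩ <;> rcases hCd' with ⟨h', hy'⟩ | ⟨h', hy'⟩
  · rw [hy, hy', hb]
  · nlinarith
  · nlinarith
  · rw [hy, hy', hb]

/-- If the orientation signs disagree at a common arc, the exit points differ. -/
lemma exit_ne {k k' : ℕ} (S : Swirl D k) (S' : Swirl D k') (i : ZMod k) (j : ZMod k')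
    (hb : S.arc i = S'.arc j)
    (hT : tripod (S.pt (i-1)) (S.pt i) (S.pt (i+1)) *
          tripod (S'.pt (j-1)) (S'.pt j) (S'.pt (j+1)) < 0) :
    S.pt (i+1) ≠ S'.pt (j+1) := by
  obtain ⟨C, hC, hCd⟩ := swirl_master S i
  obtain ⟨C', hC', hCd'⟩ := swirl_master S' j
  have hσ := side_mul_pos S S' i j hb
  rw [← hb] at hC'
  rw [hC, hC'] at hT
  have hCC' : C * C' < 0 := by
    by_contra hle
    push_neg at hle
    nlinarith
  rcases hCd with ⟨h, hy⟩ | ⟨h, hy⟩ <;> rcases hCd' with ⟨h', hy'⟩ | ⟨h', hy'⟩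
  · nlinarith
  · rw [hy, hy', hb]
    exact ((S'.arc j).hne).symm
  · rw [hy, hy', hb]
    exact (S'.arc j).hne
  · nlinarith
section Aux4

open Arc

variable {D : SOD}

/-- Two swirls turn in the same rotational direction. -/
def SameDir {k k' : ℕ} (S : Swirl D k) (S' : Swirl D k') : Prop :=
  (S.Clockwise ∧ S'.Clockwise) ∨ (S.Counterclockwise ∧ S'.Counterclockwise)

lemma SameDir.symm {k k' : ℕ} {S : Swirl D k} {S' : Swirl D k'} (h : SameDir S S') :
    SameDir S' S := by
  rcases h with ⟨a, b⟩ | ⟨a, b⟩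
  exacts [Or.inl ⟨b, a⟩, Or.inr ⟨b, a⟩]

lemma SameDir.prod_pos {k k' : ℕ} {S : Swirl D k} {S' : Swirl D k'} (h : SameDir S S')
    (i : ZMod k) (j : ZMod k') :
    0 < tripod (S.pt (i-1)) (S.pt i) (S.pt (i+1)) *
        tripod (S'.pt (j-1)) (S'.pt j) (S'.pt (j+1)) := by
  rcases h with ⟨h1, h2⟩ | ⟨h1, h2⟩
  · exact mul_pos_of_neg_of_neg (Swirl.cw_at h1 i) (Swirl.cw_at h2 j)
  · exact mul_pos (Swirl.ccw_at h1 i) (Swirl.ccw_at h2 j)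

lemma opp_prod_neg {k k' : ℕ} {S : Swirl D k} {S' : Swirl D k'}
    (h1 : S.Clockwise) (h2 : S'.Counterclockwise) (i : ZMod k) (j : ZMod k') :
    tripod (S.pt (i-1)) (S.pt i) (S.pt (i+1)) *
        tripod (S'.pt (j-1)) (S'.pt j) (S'.pt (j+1)) < 0 :=
  mul_neg_of_neg_of_pos (Swirl.cw_at h1 i) (Swirl.ccw_at h2 j)

/-- Forward determinism: two swirls of the same direction agreeing at one arc
agree forever after. -/
lemma det_forward {k k' : ℕ} (S : Swirl D k) (S' : Swirl D k') (hd : SameDir S S')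
    {i : ZMod k} {j : ZMod k'} (hij : S.arc i = S'.arc j) :
    ∀ m : ℕ, S.arc (i + m) = S'.arc (j + m) := by
  intro m
  induction m with
  | zero => simpa using hij
  | succ n ih =>
    have hpt := exit_eq S S' (i + n) (j + n) ih (hd.prod_pos _ _)
    have h1 := S.hits (i + n)
    have h2 := S'.hits (j + n)
    rw [← hpt, ← ih] at h2
    have heq := hit_unique D (S.mem (i + n + 1)) (S'.mem (j + n + 1)) h1 h2
    have e1 : ((n+1 : ℕ) : ZMod k) = (n : ZMod k) + 1 := by push_cast; ring
    have e2 : ((n+1 : ℕ) : ZMod k') = (n : ZMod k') + 1 := by push_cast; ring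
    rw [e1, e2, ← add_assoc, ← add_assoc]
    exact heq

lemma det_dvd {k k' : ℕ} (S : Swirl D k) (S' : Swirl D k')
    {i : ZMod k} {j : ZMod k'} (hf : ∀ m : ℕ, S.arc (i + m) = S'.arc (j + m)) :
    k ∣ k' := by
  have h1 := hf k'
  rw [ZMod.natCast_self, add_zero] at h1
  have h0 := hf 0
  simp only [Nat.cast_zero, add_zero] at h0
  have : S.arc (i + (k' : ℕ)) = S.arc i := h1.trans h0.symm
  have hi : i + (k' : ℕ) = i := S.inj this
  have hz : ((k' : ℕ) : ZMod k) = 0 := by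
    have := hi
    rwa [add_eq_left] at this
  exact (ZMod.natCast_eq_zero_iff _ _).mp hz

lemma det_keq {k k' : ℕ} (S : Swirl D k) (S' : Swirl D k') (hd : SameDir S S')
    {i : ZMod k} {j : ZMod k'} (hij : S.arc i = S'.arc j) : k = k' :=
  Nat.dvd_antisymm (det_dvd S S' (det_forward S S' hd hij))
    (det_dvd S' S (det_forward S' S hd.symm hij.symm))

lemma det_cyceq {k k' : ℕ} (S : Swirl D k) (S' : Swirl D k') (hd : SameDir S S')
    {i : ZMod k} {j : ZMod k'} (hij : S.arc i = S'.arc j) : S.CyclicEq S' := by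
  have hk : k = k' := det_keq S S' hd hij
  subst hk
  haveI : NeZero k := ⟨S.kpos.ne'⟩
  have hf := det_forward S S' hd hij
  refine ⟨rfl, i.val + (k - j.val), fun n => ?_⟩
  have hm := hf (n + (k - j.val))
  have hi : ((i.val : ℕ) : ZMod k) = i := ZMod.natCast_zmod_val i
  have hsub : ((k - j.val : ℕ) : ZMod k) = - j := by
    rw [Nat.cast_sub (ZMod.val_lt j).le, ZMod.natCast_self, ZMod.natCast_zmod_val]
    ring
  have e1 : ((n + (i.val + (k - j.val)) : ℕ) : ZMod k) = i + ((n : ZMod k) + -j) := by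
    rw [Nat.cast_add, Nat.cast_add, hi, hsub]
    ring
  have e2 : ((n + (k - j.val) : ℕ) : ZMod k) = (n : ZMod k) + -j := by
    rw [Nat.cast_add, hsub]
  rw [e1]
  rw [e2] at hm
  have e3 : j + ((n : ZMod k) + -j) = (n : ZMod k) := by ring
  rw [e3] at hm
  rw [(by ring : i + ((n : ZMod k) + -j) = i + ((n : ZMod k) + -j))]
  exact hm

lemma det_pred {k k' : ℕ} (S : Swirl D k) (S' : Swirl D k') (hd : SameDir S S')
    {i : ZMod k} {j : ZMod k'} (hij : S.arc i = S'.arc j) :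
    S.arc (i - 1) = S'.arc (j - 1) := by
  have hk : k = k' := det_keq S S' hd hij
  subst hk
  have hf := det_forward S S' hd hij
  have hm := hf (k - 1)
  have hs : ((k - 1 : ℕ) : ZMod k) = -1 := by
    rw [Nat.cast_sub S.kpos, ZMod.natCast_self, Nat.cast_one]
    ring
  rw [hs, (by ring : i + (-1 : ZMod k) = i - 1), (by ring : j + (-1 : ZMod k) = j - 1)] at hm
  exact hm

lemma opp_dir {k k' : ℕ} (S : Swirl D k) (S' : Swirl D k')
    {i : ZMod k} {j : ZMod k'} (hij : S.arc i = S'.arc j) (hne : ¬ S.CyclicEq S') :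
    (S.Clockwise ∧ S'.Counterclockwise) ∨ (S.Counterclockwise ∧ S'.Clockwise) := by
  have h1 : S.Clockwise ∨ S.Counterclockwise := S.dir
  have h2 : S'.Clockwise ∨ S'.Counterclockwise := S'.dir
  rcases h1 with h1 | h1 <;> rcases h2 with h2 | h2
  · exact absurd (det_cyceq S S' (Or.inl ⟨h1, h2⟩) hij) hne
  · exact Or.inl ⟨h1, h2⟩
  · exact Or.inr ⟨h1, h2⟩
  · exact absurd (det_cyceq S S' (Or.inr ⟨h1, h2⟩) hij) hne
section Main

open Arc

lemma mem_pair_cases {p q x y1 y2 : V3} (hx : x = p ∨ x = q) (h1 : y1 = p ∨ y1 = q)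
    (h2 : y2 = p ∨ y2 = q) (hne : y1 ≠ y2) : x = y1 ∨ x = y2 := by
  rcases hx with rfl | rfl <;> rcases h1 with rfl | rfl <;> rcases h2 with rfl | rfl <;> tauto

lemma cover_half (D : SOD) {b a : Arc} (hb : b ∈ D.arcs) {x : V3} (hax : a.HitsAt b x)
    {kU : ℕ} (U : Swirl D kU) {iU : ZMod kU} (hU : U.arc iU = a)
    (hxU : U.pt (iU + 1) = x)
    {kS : ℕ} (S : Swirl D kS) {iS : ZMod kS} (eS : S.arc iS = b)
    (hd : SameDir U S) : a = S.arc (iS - 1) := by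
  have h1 := U.hits iU
  rw [hU, hxU] at h1
  have hb' : U.arc (iU + 1) = b := hit_unique D (U.mem (iU + 1)) hb h1 hax
  have hpr := det_pred U S hd (hb'.trans eS.symm)
  rw [(by ring : iU + 1 - 1 = iU), hU] at hpr
  exact hpr

lemma blocked_eq (D : SOD) (hsw : D.Swirling) {b : Arc} (hb : b ∈ D.arcs)
    {k₁ k₂ : ℕ} (S₁ : Swirl D k₁) (S₂ : Swirl D k₂) (i₁ : ZMod k₁) (i₂ : ZMod k₂)
    (e₁ : S₁.arc i₁ = b) (e₂ : S₂.arc i₂ = b)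
    (h1 : S₁.Clockwise) (h2 : S₂.Counterclockwise) :
    D.blockedBy b = {S₁.arc (i₁ - 1), S₂.arc (i₂ - 1)} ∧
      S₁.arc (i₁ - 1) ≠ S₂.arc (i₂ - 1) := by
  have hits₁ : Arc.HitsAt (S₁.arc (i₁ - 1)) b (S₁.pt i₁) := by
    have h := S₁.hits' i₁; rwa [e₁] at h
  have hits₂ : Arc.HitsAt (S₂.arc (i₂ - 1)) b (S₂.pt i₂) := by
    have h := S₂.hits' i₂; rwa [e₂] at h
  -- the two predecessors are distinct
  have hne : S₁.arc (i₁ - 1) ≠ S₂.arc (i₂ - 1) := by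
    intro h
    by_cases hx : S₁.pt i₁ = S₂.pt i₂
    · -- same entry point: opposite orientations force different entry points
      have hT := opp_prod_neg h1 h2 (i₁ - 1) (i₂ - 1)
      have hxne := exit_ne S₁ S₂ (i₁ - 1) (i₂ - 1) h hT
      rw [(by ring : i₁ - 1 + 1 = i₁), (by ring : i₂ - 1 + 1 = i₂)] at hxne
      exact hxne hx
    · -- different entry points: contradiction with axiom A3
      have hmem1 : S₁.pt i₁ = (S₁.arc (i₁-1)).p ∨ S₁.pt i₁ = (S₁.arc (i₁-1)).q := hits₁.2.1
      have hmem2' : S₂.pt i₂ ∈ (S₁.arc (i₁-1)).endpoints := by rw [h]; exact hits₂.2.1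
      have hmem2 : S₂.pt i₂ = (S₁.arc (i₁-1)).p ∨ S₂.pt i₂ = (S₁.arc (i₁-1)).q := hmem2'
      have hoe : (S₁.arc (i₁-1)).otherEnd (S₁.pt i₁) = S₂.pt i₂ := by
        rcases hmem1 with hp | hq <;> rcases hmem2 with hp' | hq'
        · exact absurd (hp.trans hp'.symm) hx
        · rw [Arc.otherEnd, if_pos hp, ← hq']
        · have hnp : ¬ (S₁.pt i₁ = (S₁.arc (i₁-1)).p) := fun hc => (S₁.arc (i₁-1)).hne (hc.symm.trans hq)
          rw [Arc.otherEnd, if_neg hnp, ← hp']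
        · exact absurd (hq.trans hq'.symm) hx
      have ha3 := D.a3 b hb _ (S₁.mem (i₁-1)) _ (S₂.mem (i₂-1)) _ _ hits₁ hits₂
      rw [hoe] at ha3
      have h0 : b.sideOf (S₂.pt i₂) = 0 := Arc.sideOf_carrier hits₂.2.2.1
      rw [h0] at ha3
      simp at ha3
  -- every arc blocked by b is one of the two predecessors
  have hcov : D.blockedBy b ⊆ {S₁.arc (i₁ - 1), S₂.arc (i₂ - 1)} := by
    rintro a ⟨haD, x, hax⟩
    obtain ⟨kT, kT', T, T', ⟨iT, hT⟩, ⟨iT', hT'⟩, hniq⟩ := hsw a haD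
    have hcom : T.arc iT = T'.arc iT' := hT.trans hT'.symm
    have hdone : ∀ {kU kU' : ℕ} (U : Swirl D kU) (U' : Swirl D kU')
        (iU : ZMod kU) (iU' : ZMod kU'),
        U.arc iU = a → U'.arc iU' = a → U.Clockwise → U'.Counterclockwise →
        a = S₁.arc (i₁ - 1) ∨ a = S₂.arc (i₂ - 1) := by
      intro kU kU' U U' iU iU' hU hU' hcw hccw
      have hTprod := opp_prod_neg hcw hccw iU iU'
      have hxne := exit_ne U U' iU iU' (hU.trans hU'.symm) hTprod
      have hm1 : U.pt (iU + 1) = a.p ∨ U.pt (iU + 1) = a.q := by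
        have h := U.hits iU; rw [hU] at h; exact h.2.1
      have hm2 : U'.pt (iU' + 1) = a.p ∨ U'.pt (iU' + 1) = a.q := by
        have h := U'.hits iU'; rw [hU'] at h; exact h.2.1
      have hmx : x = a.p ∨ x = a.q := hax.2.1
      rcases mem_pair_cases hmx hm1 hm2 hxne with hxu | hxu
      · exact Or.inl (cover_half D hb hax U hU hxu.symm S₁ e₁ (Or.inl ⟨hcw, h1⟩))
      · exact Or.inr (cover_half D hb hax U' hU' hxu.symm S₂ e₂ (Or.inr ⟨hccw, h2⟩))
    rcases opp_dir T T' hcom hniq with ⟨ha', hb'⟩ | ⟨ha', hb'⟩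
    · exact hdone T T' iT iT' hT hT' ha' hb'
    · exact hdone T' T iT' iT hT' hT hb' ha'
  refine ⟨Set.Subset.antisymm hcov ?_, hne⟩
  rintro a (rfl | rfl)
  · exact ⟨S₁.mem (i₁ - 1), S₁.pt i₁, hits₁⟩
  · exact ⟨S₂.mem (i₂ - 1), S₂.pt i₂, hits₂⟩

end Main

/-- Every swirling spherical occlusion diagram is uniform: each
arc blocks exactly two arcs. -/
theorem stmt_18 (D : SOD) (hsw : D.Swirling) :
    ∀ b ∈ D.arcs, (D.blockedBy b).ncard = 2 := by
  intro b hb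
  obtain ⟨k₁, k₂, S₁, S₂, ⟨i₁, e₁⟩, ⟨i₂, e₂⟩, hniq⟩ := hsw b hb
  have hcom : S₁.arc i₁ = S₂.arc i₂ := e₁.trans e₂.symm
  rcases opp_dir S₁ S₂ hcom hniq with ⟨h1, h2⟩ | ⟨h1, h2⟩
  · obtain ⟨heq, hne'⟩ := blocked_eq D hsw hb S₁ S₂ i₁ i₂ e₁ e₂ h1 h2
    rw [heq]
    exact Set.ncard_pair hne'
  · obtain ⟨heq, hne'⟩ := blocked_eq D hsw hb S₂ S₁ i₂ i₁ e₂ e₁ h2 h1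
    rw [heq]
    exact Set.ncard_pair hne'
end Aux4
end Aux3
end Aux2
end Aux
end
end
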